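/- arXiv:1506.00112 — 6 statements merged into one kernel-verified Lean document; each statement's English description precedes it below -/
import Mathlib

section
/- Let g ∈ S and let τ be a filter on S such that g⁻¹U ∈ τ for every U ∈ τ. If L ⊆ S is τ-large then gL is τ-large. -/
variable {S : Type*} [Semigroup S]

/-- `g⁻¹A = {x : g*x ∈ A}`. -/
def invImg (g : S) (A : Set S) : Set S := {x | g * x ∈ A}

/-- `F⁻¹A = ⋃_{g∈F} g⁻¹A`. -/
def finvImg (F : Set S) (A : Set S) : Set S := ⋃ g ∈ F, invImg g A

/-- `L` is `τ`-large. -/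
def largeTau (τ : Filter S) (L : Set S) : Prop :=
  ∀ U ∈ τ, ∃ F : Finset S, ↑F ⊆ U ∧ finvImg ↑F L ∈ τ

/-- `A_p = {x : x⁻¹A ∈ p}`. -/
def memImg (p : Ultrafilter S) (A : Set S) : Set S := {x | invImg x A ∈ p}

/-- `T` is `τ`-thick. -/
def thickTau (τ : Filter S) (T : Set S) : Prop :=
  ∃ U ∈ τ, ∀ F : Finset S, ↑F ⊆ U → ∀ V ∈ τ, ∃ x ∈ V, ∀ f ∈ F, f * x ∈ T

/-- `A` is `τ`-prethick. -/
def prethickTau (τ : Filter S) (A : Set S) : Prop :=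
  ∀ U ∈ τ, ∃ F : Finset S, ↑F ⊆ U ∧ thickTau τ (finvImg ↑F A)

/-- `A` is `τ`-small. -/
def smallTau (τ : Filter S) (A : Set S) : Prop :=
  ∀ L, largeTau τ L → largeTau τ (L \ A)

/-- `T` is `τ`-extrathick. -/
def extrathickTau (τ : Filter S) (T : Set S) : Prop :=
  ∀ p : Ultrafilter S, τ ≤ ↑p → memImg p T ∈ τ

/-- Product of ultrafilters: `A ∈ p*q ↔ {x : x⁻¹A ∈ q} ∈ p`. -/
def uMul (p q : Ultrafilter S) : Ultrafilter S :=
  p.bind fun x => q.map fun y => x * y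

/-- `τ̄ = {p ∈ βS : τ ⊆ p}`. -/
def tauBar (τ : Filter S) : Set (Ultrafilter S) := {p | τ ≤ ↑p}

/-- `L` is a left ideal of the subsemigroup `T` of `βS`. -/
def isLeftIdeal (T L : Set (Ultrafilter S)) : Prop :=
  L.Nonempty ∧ L ⊆ T ∧ ∀ q ∈ T, ∀ r ∈ L, uMul q r ∈ L

/-- `L` is a minimal left ideal of `T`. -/
def isMinLeftIdeal (T L : Set (Ultrafilter S)) : Prop :=
  isLeftIdeal T L ∧ ∀ L', isLeftIdeal T L' → L' ⊆ L → L' = L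

/-- `M(τ̄)`: union of all minimal left ideals of `τ̄`. -/
def MSet (τ : Filter S) : Set (Ultrafilter S) := ⋃₀ {L | isMinLeftIdeal (tauBar τ) L}

/-- `Δ_τ(A)`. -/
def DeltaTau (τ : Filter S) (A : Set S) : Set S :=
  {x | ∀ U ∈ τ, ((invImg x A ∩ A) ∩ U).Nonempty}

theorem invImg_subset_invImg_mul_image (g b : S) (L : Set S) :
    invImg b L ⊆ invImg (g * b) ((g * ·) '' L) :=
  fun x hx => ⟨b * x, hx, (mul_assoc g b x).symm⟩

theorem finvImg_subset_finvImg_mul_image (g : S) (F L : Set S) :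
    finvImg F L ⊆ finvImg ((g * ·) '' F) ((g * ·) '' L) := by
  simp only [finvImg, Set.biUnion_image]
  exact Set.biUnion_mono subset_rfl fun b _ => invImg_subset_invImg_mul_image g b L

theorem stmt3_general (τ : Filter S) (g : S)
    (hg : ∀ U ∈ τ, invImg g U ∈ τ) (L : Set S) (hL : largeTau τ L) :
    largeTau τ ((fun x => g * x) '' L) := by
  classical
  intro U hU
  obtain ⟨F, hFU, hF⟩ := hL (invImg g U) (hg U hU)
  refine ⟨F.image (g * ·), ?_, ?_⟩
  · rw [Finset.coe_image, Set.image_subset_iff]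
    exact hFU
  · rw [Finset.coe_image]
    exact Filter.mem_of_superset hF (finvImg_subset_finvImg_mul_image g F L)

theorem stmt3 (τ : Filter S) [τ.NeBot] (g : S)
    (hg : ∀ U ∈ τ, invImg g U ∈ τ) (L : Set S) (hL : largeTau τ L) :
    largeTau τ ((fun x => g * x) '' L) :=
  stmt3_general τ g hg L hL
end

section
/- Let τ be a filter on a semigroup S such that for every U ∈ τ the set {g ∈ S : g⁻¹U ∈ τ} belongs to τ. If T is τ-thick, then there exists V ∈ τ such that g⁻¹T is τ-thick for every g ∈ V. -/
variable {S : Type*} [Semigroup S]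

/- A witness `U` for the thickness of `T` is pulled back by `g` to the witness `g⁻¹U` for the
thickness of `g⁻¹T`: a finite `F ⊆ g⁻¹U` gives the finite `gF ⊆ U`, and `(gf)x ∈ T` means `fx ∈ g⁻¹T`. -/
theorem thickTau_invImg_of_witness {τ : Filter S} {T U : Set S}
    (hU : ∀ F : Finset S, ↑F ⊆ U → ∀ V ∈ τ, ∃ x ∈ V, ∀ f ∈ F, f * x ∈ T)
    {g : S} (hg : invImg g U ∈ τ) : thickTau τ (invImg g T) := by
  classical
  refine ⟨invImg g U, hg, fun F hF V hV => ?_⟩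
  have hgF : ↑(F.image (g * ·)) ⊆ U := by
    rw [Finset.coe_image, Set.image_subset_iff]
    exact hF
  obtain ⟨x, hxV, hx⟩ := hU _ hgF V hV
  refine ⟨x, hxV, fun f hf => ?_⟩
  simpa only [invImg, Set.mem_ofPred_eq, mul_assoc] using
    hx (g * f) (Finset.mem_image_of_mem _ hf)

theorem stmt5_general (τ : Filter S)
    (h : ∀ U ∈ τ, {g : S | invImg g U ∈ τ} ∈ τ) (T : Set S) (hT : thickTau τ T) :
    ∃ V ∈ τ, ∀ g ∈ V, thickTau τ (invImg g T) := by
  obtain ⟨U, hU, hUT⟩ := hT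
  exact ⟨_, h U hU, fun _ hg => thickTau_invImg_of_witness hUT hg⟩

theorem stmt5 (τ : Filter S) [τ.NeBot]
    (h : ∀ U ∈ τ, {g : S | invImg g U ∈ τ} ∈ τ) (T : Set S) (hT : thickTau τ T) :
    ∃ V ∈ τ, ∀ g ∈ V, thickTau τ (invImg g T) :=
  stmt5_general τ h T hT
end

section
/- In the topological group ℝ (additive) with τ the filter of neighborhoods of 0, the set ℝ⁺ = {r ∈ ℝ : r > 0} is τ-large, but for every x > 0 the translate ℝ⁺ + x is not τ-large. -/
/-- Additive version: `a⁻¹A = {x : a + x ∈ A}`. -/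
def ainvImg (a : ℝ) (A : Set ℝ) : Set ℝ := {x | a + x ∈ A}

/-- `F⁻¹A = ⋃_{a∈F} a⁻¹A`. -/
def afinvImg (F : Set ℝ) (A : Set ℝ) : Set ℝ := ⋃ a ∈ F, ainvImg a A

/-- `L` is `τ`-large (additive notation). -/
def alargeTau (τ : Filter ℝ) (L : Set ℝ) : Prop :=
  ∀ U ∈ τ, ∃ F : Finset ℝ, ↑F ⊆ U ∧ afinvImg ↑F L ∈ τ

/-!
`Ioi c` is large at `0` iff `c ≤ 0`. For `c ≤ 0`, one small positive `a ∈ U` suffices, since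
`a + x > c` on the neighbourhood `Ioi (c - a)` of `0`. Conversely, a large set meets every
neighbourhood `U` of `0`: `0` lies in `F⁻¹L` for the chosen `F ⊆ U`, i.e. some `a ∈ F` lies in `L`;
and `Ioi c` misses `Iio c` when `c > 0`.
-/

open Set Filter Topology

theorem mem_afinvImg {F A : Set ℝ} {x : ℝ} : x ∈ afinvImg F A ↔ ∃ a ∈ F, a + x ∈ A := by
  simp [afinvImg, ainvImg]

theorem afinvImg_singleton (a : ℝ) (A : Set ℝ) : afinvImg {a} A = ainvImg a A := by
  simp [afinvImg]

theorem ainvImg_Ioi (a c : ℝ) : ainvImg a (Ioi c) = Ioi (c - a) := by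
  ext x
  exact (sub_lt_iff_lt_add' (a := c) (b := a) (c := x)).symm

theorem alargeTau.inter_nonempty {τ : Filter ℝ} {L U : Set ℝ} (hτ : pure 0 ≤ τ)
    (hL : alargeTau τ L) (hU : U ∈ τ) : (L ∩ U).Nonempty := by
  obtain ⟨F, hFU, hF⟩ := hL U hU
  obtain ⟨a, haF, ha⟩ := mem_afinvImg.mp (hτ hF : (0 : ℝ) ∈ afinvImg F L)
  exact ⟨a, by simpa using ha, hFU haF⟩

theorem alargeTau_nhds_Ioi {c : ℝ} (hc : c ≤ 0) : alargeTau (𝓝 0) (Ioi c) := by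
  intro U hU
  obtain ⟨a, haU, ha⟩ := Filter.nonempty_of_mem
    (inter_mem (nhdsWithin_le_nhds hU) self_mem_nhdsWithin : U ∩ Ioi 0 ∈ 𝓝[>] (0 : ℝ))
  refine ⟨{a}, by simpa using haU, ?_⟩
  rw [Finset.coe_singleton, afinvImg_singleton, ainvImg_Ioi]
  exact Ioi_mem_nhds (by linarith [mem_Ioi.mp ha])

theorem alargeTau_nhds_Ioi_iff {c : ℝ} : alargeTau (𝓝 0) (Ioi c) ↔ c ≤ 0 := by
  refine ⟨fun hL => ?_, alargeTau_nhds_Ioi⟩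
  by_contra! hc
  obtain ⟨a, hca, hac⟩ := hL.inter_nonempty (pure_le_nhds 0) (Iio_mem_nhds hc)
  exact lt_asymm (mem_Ioi.mp hca) hac

theorem stmt6 :
    alargeTau (nhds 0) {r : ℝ | 0 < r} ∧
      ∀ x : ℝ, 0 < x → ¬ alargeTau (nhds 0) ((fun r => r + x) '' {r : ℝ | 0 < r}) := by
  refine ⟨alargeTau_nhds_Ioi le_rfl, fun x hx => ?_⟩
  change ¬alargeTau _ (_ '' Ioi 0)
  rw [image_add_const_Ioi, zero_add, alargeTau_nhds_Ioi_iff]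
  exact hx.not_ge
end

section
/- Let G be a group and τ the neighborhood filter of the identity for some group topology on G, and let U ∈ τ. For every partition U = A ∪ B into two cells and every V ∈ τ, there exist a cell C ∈ {A, B} and a set K ⊆ V with |K| ≤ 2 such that K⁻¹CC⁻¹ ∈ τ. -/
variable {S : Type*} [Semigroup S]

/-
Shrink to an open `W ∋ 1` inside `V` with `W * W ⊆ U`, and say `1 ∈ A`. If every `q ∈ W`
moves some point of `W ∩ B` back into `B`, then `q = (q x) x⁻¹ ∈ B B⁻¹`, so `W ⊆ B B⁻¹` and
`K = {1}` works. Otherwise some `q ∈ W` maps `W ∩ B` into `U \ B ⊆ A`; then every `x ∈ W` lies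
in `A` or has `q x ∈ A`, so `W ⊆ {1, q}⁻¹ (A A⁻¹)`.
-/

open Pointwise Topology

theorem mem_finvImg_iff {S : Type*} [Semigroup S] {F A : Set S} {x : S} :
    x ∈ finvImg F A ↔ ∃ g ∈ F, g * x ∈ A := by
  simp [finvImg, invImg]

theorem subset_mul_inv_self {G : Type*} [Group G] {A : Set G} (h1A : (1 : G) ∈ A) :
    A ⊆ A * A⁻¹ :=
  Set.subset_mul_left A (by simpa using h1A)

theorem subset_mul_inv_or_exists_subset_finvImg_pair {G : Type*} [Group G] {A B W : Set G}
    (h1A : (1 : G) ∈ A) (h1W : (1 : G) ∈ W) (hW : W * W ⊆ A ∪ B) :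
    W ⊆ B * B⁻¹ ∨ ∃ q ∈ W, W ⊆ finvImg {1, q} (A * A⁻¹) := by
  by_cases hmove : ∀ q ∈ W, ∃ x ∈ W ∩ B, q * x ∈ B
  · left
    intro q hq
    obtain ⟨x, hx, hqx⟩ := hmove q hq
    simpa using Set.mul_mem_mul hqx (Set.inv_mem_inv.mpr hx.2)
  · right
    push Not at hmove
    obtain ⟨q, hq, hqB⟩ := hmove
    refine ⟨q, hq, fun x hx => mem_finvImg_iff.mpr ?_⟩
    have hxAB : x ∈ A ∪ B := hW (by simpa using Set.mul_mem_mul hx h1W)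
    rcases hxAB with hxA | hxB
    · exact ⟨1, by simp, subset_mul_inv_self h1A (by simpa using hxA)⟩
    · have hqxA : q * x ∈ A :=
        (hW (Set.mul_mem_mul hq hx)).resolve_right (hqB x ⟨hx, hxB⟩)
      exact ⟨q, by simp, subset_mul_inv_self h1A hqxA⟩

theorem exists_finvImg_mul_inv_mem_nhds_of_one_mem {G : Type*} [Group G] [TopologicalSpace G]
    [ContinuousMul G] {A B V : Set G} (hAB : A ∪ B ∈ 𝓝 (1 : G)) (h1A : (1 : G) ∈ A)
    (hV : V ∈ 𝓝 (1 : G)) :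
    ∃ C ∈ ({A, B} : Set (Set G)), ∃ K : Finset G,
      ↑K ⊆ V ∧ K.card ≤ 2 ∧ finvImg ↑K (C * C⁻¹) ∈ 𝓝 (1 : G) := by
  classical
  obtain ⟨W₀, hW₀open, h1W₀, hW₀⟩ := exists_open_nhds_one_mul_subset hAB
  have hW : W₀ ∩ V ∈ 𝓝 (1 : G) := Filter.inter_mem (hW₀open.mem_nhds h1W₀) hV
  have hWW : (W₀ ∩ V) * (W₀ ∩ V) ⊆ A ∪ B :=
    (Set.mul_subset_mul Set.inter_subset_left Set.inter_subset_left).trans hW₀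
  rcases subset_mul_inv_or_exists_subset_finvImg_pair h1A (mem_of_mem_nhds hW) hWW with
    hB | ⟨q, hq, hA⟩
  · refine ⟨B, by simp, {1}, by simpa using mem_of_mem_nhds hV, by simp, ?_⟩
    exact Filter.mem_of_superset hW fun x hx =>
      mem_finvImg_iff.mpr ⟨1, by simp, by simpa using hB hx⟩
  · refine ⟨A, by simp, {1, q}, ?_, Finset.card_le_two, ?_⟩
    · simpa [Set.insert_subset_iff] using ⟨mem_of_mem_nhds hV, hq.2⟩
    · simpa using Filter.mem_of_superset hW hA

open Pointwise in
theorem stmt10 {G : Type*} [Group G] [TopologicalSpace G] [IsTopologicalGroup G]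
    (U : Set G) (hU : U ∈ nhds (1 : G)) (A B : Set G) (hAB : U = A ∪ B)
    (V : Set G) (hV : V ∈ nhds (1 : G)) :
    ∃ C ∈ ({A, B} : Set (Set G)), ∃ K : Finset G,
      ↑K ⊆ V ∧ K.card ≤ 2 ∧ finvImg ↑K (C * C⁻¹) ∈ nhds (1 : G) := by
  subst hAB
  rcases mem_of_mem_nhds hU with h1A | h1B
  · exact exists_finvImg_mul_inv_mem_nhds_of_one_mem hU h1A hV
  · obtain ⟨C, hC, hK⟩ :=
      exists_finvImg_mul_inv_mem_nhds_of_one_mem (Set.union_comm A B ▸ hU) h1B hV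
    exact ⟨C, Set.pair_comm A B ▸ hC, hK⟩
end

section
/- Let τ be a left inverse invariant filter on a semigroup S. Then the family of τ-prethick subsets of S is partition regular: if A is τ-prethick and A = A₁ ∪ … ∪ Aₙ, then some Aᵢ is τ-prethick. -/
/-!
A set is `τ`-prethick exactly when it is not `τ`-small, i.e. when removing it from some `τ`-large
set destroys largeness. Since the `τ`-small sets are closed under finite unions, a finite cover of
a prethick set by small sets is impossible.
-/

variable {S : Type*} [Semigroup S]

open scoped Pointwise

variable {τ : Filter S}

lemma mem_finvImg {F A : Set S} {x : S} : x ∈ finvImg F A ↔ ∃ g ∈ F, g * x ∈ A := by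
  simp [finvImg, invImg]

lemma finvImg_mono {F A B : Set S} (h : A ⊆ B) : finvImg F A ⊆ finvImg F B := fun _ hx =>
  let ⟨g, hg, hgx⟩ := mem_finvImg.1 hx
  mem_finvImg.2 ⟨g, hg, h hgx⟩

lemma biInter_invImg_mem (hinv : ∀ g : S, ∀ U ∈ τ, invImg g U ∈ τ) (F : Finset S) {U : Set S}
    (hU : U ∈ τ) : ⋂ f ∈ F, invImg f U ∈ τ :=
  (Filter.biInter_finset_mem F).2 fun f _ => hinv f U hU

lemma largeTau_mono {L L' : Set S} (h : L ⊆ L') (hL : largeTau τ L) : largeTau τ L' := by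
  intro U hU
  obtain ⟨F, hFU, hFL⟩ := hL U hU
  exact ⟨F, hFU, Filter.mem_of_superset hFL (finvImg_mono h)⟩

lemma smallTau_union {A B : Set S} (hA : smallTau τ A) (hB : smallTau τ B) :
    smallTau τ (A ∪ B) := by
  intro L hL
  simpa only [Set.sdiff_sdiff] using hB _ (hA L hL)

lemma smallTau_iUnion {ι : Type*} [Finite ι] {f : ι → Set S} (h : ∀ i, smallTau τ (f i)) :
    smallTau τ (⋃ i, f i) := by
  classical
  have := Fintype.ofFinite ι
  suffices ∀ s : Finset ι, smallTau τ (⋃ i ∈ s, f i) by simpa using this Finset.univ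
  intro s
  induction s using Finset.induction_on with
  | empty => simp [smallTau]
  | insert a s _ ih =>
    rw [Finset.set_biUnion_insert]
    exact smallTau_union (h a) ih

lemma thickTau.neBot {T : Set S} (hT : thickTau τ T) : τ.NeBot := by
  obtain ⟨_, _, hthick⟩ := hT
  refine Filter.forall_mem_nonempty_iff_neBot.1 fun V hV => ?_
  obtain ⟨x, hx, -⟩ := hthick ∅ (by simp) V hV
  exact ⟨x, hx⟩

lemma thickTau.not_largeTau_compl {T : Set S} (hT : thickTau τ T) : ¬ largeTau τ Tᶜ := by
  intro hlarge
  obtain ⟨W, hW, hthick⟩ := hT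
  obtain ⟨F, hFW, hFT⟩ := hlarge W hW
  obtain ⟨x, hx, hxT⟩ := hthick F hFW _ hFT
  obtain ⟨g, hg, hgx⟩ := mem_finvImg.1 hx
  exact hgx (hxT g hg)

/-- Given `U ∈ τ`, pick `u ∈ U` with `F₀ u ⊆ U`: every `x` lies in `u⁻¹(F₀⁻¹A)ᶜ` or in
`(F₀ u)⁻¹A`. -/
lemma largeTau_union_compl_finvImg [τ.NeBot] (hinv : ∀ g : S, ∀ U ∈ τ, invImg g U ∈ τ)
    (F₀ : Finset S) (A : Set S) : largeTau τ (A ∪ (finvImg ↑F₀ A)ᶜ) := by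
  classical
  intro U hU
  obtain ⟨u, huU, huF₀⟩ :=
    Filter.nonempty_of_mem (Filter.inter_mem hU (biInter_invImg_mem hinv F₀ hU))
  refine ⟨insert u (F₀ * {u}), ?_, Filter.mem_of_superset Filter.univ_mem fun x _ => ?_⟩
  · rw [Finset.coe_insert, Finset.coe_mul, Finset.coe_singleton, Set.insert_subset_iff,
      Set.mul_singleton, Set.image_subset_iff]
    exact ⟨huU, fun f hf => Set.mem_iInter₂.1 huF₀ f hf⟩
  by_cases hux : u * x ∈ finvImg ↑F₀ A
  · obtain ⟨g, hg, hgux⟩ := mem_finvImg.1 hux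
    refine mem_finvImg.2 ⟨g * u, ?_, Or.inl (by rwa [mul_assoc])⟩
    exact Finset.mem_insert_of_mem (Finset.mul_mem_mul hg (Finset.mem_singleton_self u))
  · exact mem_finvImg.2 ⟨u, Finset.mem_insert_self _ _, Or.inr hux⟩

lemma prethickTau.not_smallTau (hinv : ∀ g : S, ∀ U ∈ τ, invImg g U ∈ τ) {A : Set S}
    (hA : prethickTau τ A) : ¬ smallTau τ A := by
  intro hsmall
  obtain ⟨F₀, -, hthick⟩ := hA Set.univ Filter.univ_mem
  have := hthick.neBot
  refine hthick.not_largeTau_compl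
    (largeTau_mono ?_ (hsmall _ (largeTau_union_compl_finvImg hinv F₀ A)))
  rintro x ⟨hx | hx, hxA⟩
  exacts [absurd hx hxA, hx]

/-- For `F' ⊆ ⋂_{f ∈ F} f⁻¹U₀` the products `F F'` lie in `U₀`, so some
`x ∈ V ∩ ⋂_{f' ∈ F'} f'⁻¹(F⁻¹L)` avoids `(F F')⁻¹(L \ B)`, whence `F' x ⊆ F⁻¹B`. -/
lemma thickTau_finvImg_of_forall_not_mem (hinv : ∀ g : S, ∀ U ∈ τ, invImg g U ∈ τ)
    {L B U₀ : Set S} (hU₀ : U₀ ∈ τ)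
    (hbad : ∀ G : Finset S, ↑G ⊆ U₀ → finvImg ↑G (L \ B) ∉ τ)
    {F : Finset S} (hFL : finvImg ↑F L ∈ τ) : thickTau τ (finvImg ↑F B) := by
  classical
  refine ⟨⋂ f ∈ F, invImg f U₀, biInter_invImg_mem hinv F hU₀, fun F' hF' V hV => ?_⟩
  have hFF' : ↑(F * F') ⊆ U₀ := by
    rw [Finset.coe_mul, Set.mul_subset_iff]
    exact fun g hg f' hf' => Set.mem_iInter₂.1 (hF' hf') g hg
  have hV' : V ∩ ⋂ f' ∈ F', invImg f' (finvImg ↑F L) ∈ τ :=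
    Filter.inter_mem hV (biInter_invImg_mem hinv F' hFL)
  obtain ⟨x, ⟨hxV, hxL⟩, hxB⟩ :=
    Set.not_subset.1 fun hsub => hbad _ hFF' (Filter.mem_of_superset hV' hsub)
  refine ⟨x, hxV, fun f' hf' => ?_⟩
  obtain ⟨g, hg, hgf'x⟩ := mem_finvImg.1 (Set.mem_iInter₂.1 hxL f' hf')
  refine mem_finvImg.2 ⟨g, hg, not_not.1 fun hnB => hxB ?_⟩
  exact mem_finvImg.2
    ⟨g * f', Finset.mul_mem_mul hg hf', by rw [mul_assoc]; exact ⟨hgf'x, hnB⟩⟩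

lemma prethickTau_of_not_smallTau (hinv : ∀ g : S, ∀ U ∈ τ, invImg g U ∈ τ) {B : Set S}
    (h : ¬ smallTau τ B) : prethickTau τ B := by
  simp only [smallTau, largeTau, not_forall, not_exists, not_and] at h
  obtain ⟨L, hL, U₀, hU₀, hbad⟩ := h
  intro U hU
  obtain ⟨F, hFU, hFL⟩ := hL U hU
  exact ⟨F, hFU, thickTau_finvImg_of_forall_not_mem hinv hU₀ hbad hFL⟩

theorem stmt12_general (τ : Filter S)
    (hinv : ∀ g : S, ∀ U ∈ τ, invImg g U ∈ τ)
    (A : Set S) (hA : prethickTau τ A)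
    (n : ℕ) (f : Fin n → Set S) (hcover : A = ⋃ i, f i) :
    ∃ i, prethickTau τ (f i) := by
  by_contra! h
  have hsmall : ∀ i, smallTau τ (f i) := fun i =>
    not_not.1 fun hi => h i (prethickTau_of_not_smallTau hinv hi)
  exact hA.not_smallTau hinv (hcover ▸ smallTau_iUnion hsmall)

theorem stmt12 (τ : Filter S) [τ.NeBot]
    (hinv : ∀ g : S, ∀ U ∈ τ, invImg g U ∈ τ)
    (A : Set S) (hA : prethickTau τ A)
    (n : ℕ) (f : Fin n → Set S) (hcover : A = ⋃ i, f i) :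
    ∃ i, prethickTau τ (f i) :=
  stmt12_general τ hinv A hA n f hcover
end

section
/- Let G be a group with a filter τ which is left inverse invariant, let X ⊆ G and let U ∈ τ. Then Δ_τ(X ∩ U) = Δ_τ(X). -/
variable {S : Type*} [Semigroup S]

theorem stmt18 {G : Type*} [Group G] (τ : Filter G) [τ.NeBot]
    (hinv : ∀ g : G, ∀ U ∈ τ, invImg g U ∈ τ)
    (X : Set G) (U : Set G) (hU : U ∈ τ) :
    DeltaTau τ (X ∩ U) = DeltaTau τ X := by
  ext x
  constructor
  · intro hx V hV
    obtain ⟨y, ⟨⟨h1, h2⟩, h3⟩⟩ := hx V hV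
    exact ⟨y, ⟨h1.1, h2.1⟩, h3⟩
  · intro hx V hV
    have hW : invImg x U ∩ U ∩ V ∈ τ :=
      Filter.inter_mem (Filter.inter_mem (hinv x U hU) hU) hV
    obtain ⟨y, ⟨⟨h1, h2⟩, ⟨⟨h3, h4⟩, h5⟩⟩⟩ := hx _ hW
    exact ⟨y, ⟨⟨h1, h3⟩, h2, h4⟩, h5⟩
end
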